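/- arXiv:2601.17928 — 2 statements merged into one kernel-verified Lean document; each statement's English description precedes it below -/
import Mathlib

section
/- Let Q be a finite injective quandle, i.e. φ_Q : Q → G(Q) is injective. Then there exist n and an injective map ρ : Q → GL_n(ℤ) satisfying ρ(x ▷ y) = ρ(x) ρ(y) ρ(x)⁻¹ for all x, y ∈ Q (an injective linear representation of Q over ℤ). -/
/-!
The enveloping group `G` of a finite quandle `Q` is generated by the finitely many elements
`φ_Q x`, and an element acting trivially on `Q` commutes with every `φ_Q x`; hence `G` is finitely
generated and its center `Z` has finite index. Such a group embeds in some `GL_n(ℤ)`. Indeed `Z` is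
a finitely generated abelian group, so it has a finite-index subgroup `K` meeting the kernel of the
projection `Z → ℤ^r` onto its free part trivially. As `K` is central it is normal in `G`, and
composing the transfer `G → Z`, `g ↦ g ^ [G : Z]`, with that projection gives a map `G → ℤ^r`
which is injective on `K`, since `ℤ^r` is torsion-free. So `G` embeds in `G/K × ℤ^r`, where
the finite group `G/K` acts by permutation matrices and `ℤ^r` by unipotent matrices. Composing
with the injective map `φ_Q` gives the representation.
-/

open Quandles Matrix Subgroup

def EmbedsInGLInt (G : Type*) [Group G] : Prop :=
  ∃ (n : ℕ) (ρ : G →* GL (Fin n) ℤ), Function.Injective ρ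

namespace Matrix

variable {α β R : Type*} [Fintype α] [Fintype β] [DecidableEq α] [DecidableEq β]
  [NonAssocSemiring R]

def fromBlocksDiagHom : Matrix α α R × Matrix β β R →* Matrix (α ⊕ β) (α ⊕ β) R where
  toFun A := fromBlocks A.1 0 0 A.2
  map_one' := fromBlocks_one
  map_mul' A B := by simp [fromBlocks_multiply]

theorem fromBlocksDiagHom_injective :
    Function.Injective (fromBlocksDiagHom : Matrix α α R × Matrix β β R →* _) := by
  intro A B h
  obtain ⟨h₁, -, -, h₂⟩ := fromBlocks_inj.mp h
  exact Prod.ext h₁ h₂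

theorem permMatrixHom_injective [Nontrivial R] :
    Function.Injective (permMatrixHom : Equiv.Perm α →* Matrix α α R) := by
  intro σ τ h
  have : σ⁻¹.toPEquiv = τ⁻¹.toPEquiv := PEquiv.toMatrix_injective h
  exact inv_injective (Equiv.ext fun x => by simpa using congrArg (· x) this)

variable (R) in
def unipotentRowHom (j : Type*) [Fintype j] [DecidableEq j] :
    (j → Multiplicative R) →* Matrix (Unit ⊕ j) (Unit ⊕ j) R where
  toFun v := fromBlocks 1 (replicateRow Unit fun i => (v i).toAdd) 0 1
  map_one' := by simp [← fromBlocks_one]; rfl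
  map_mul' v w := by
    rw [fromBlocks_multiply]
    congr 1 <;> ext <;> simp [add_comm]

theorem unipotentRowHom_injective (j : Type*) [Fintype j] [DecidableEq j] :
    Function.Injective (unipotentRowHom R j) := by
  intro v w h
  funext i
  simpa [unipotentRowHom] using congrFun₂ h (Sum.inl ()) (Sum.inr i)

end Matrix

namespace EmbedsInGLInt

variable {G H : Type*} [Group G] [Group H]

theorem of_injective (f : G →* H) (hf : Function.Injective f) (hH : EmbedsInGLInt H) :
    EmbedsInGLInt G :=
  let ⟨n, ρ, hρ⟩ := hH
  ⟨n, ρ.comp f, hρ.comp hf⟩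

theorem of_injective_fintype {ι : Type*} [Fintype ι] [DecidableEq ι] (ρ : G →* GL ι ℤ)
    (hρ : Function.Injective ρ) : EmbedsInGLInt G :=
  let e := reindexAlgEquiv ℤ ℤ (Fintype.equivFin ι)
  ⟨_, (Units.map e.toMonoidHom).comp ρ, (Units.map_injective e.injective).comp hρ⟩

theorem prod (hG : EmbedsInGLInt G) (hH : EmbedsInGLInt H) : EmbedsInGLInt (G × H) := by
  obtain ⟨m, ρ, hρ⟩ := hG
  obtain ⟨n, σ, hσ⟩ := hH
  exact of_injective_fintype
    ((Units.map fromBlocksDiagHom).comp (MulEquiv.prodUnits.symm.toMonoidHom.comp (ρ.prodMap σ)))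
    ((Units.map_injective fromBlocksDiagHom_injective).comp
      (MulEquiv.prodUnits.symm.injective.comp (Prod.map_injective.mpr ⟨hρ, hσ⟩)))

theorem of_finite [Finite G] : EmbedsInGLInt G := by
  classical
  have := Fintype.ofFinite G
  let ρ : G →* GL G ℤ := permMatrixHom.toHomUnits.comp (MulAction.toPermHom G G)
  exact of_injective_fintype ρ fun g h hgh => MulAction.toPerm_injective (permMatrixHom_injective (congrArg Units.val hgh))

theorem pi_multiplicative_int (j : Type*) [Finite j] : EmbedsInGLInt (j → Multiplicative ℤ) := by
  classical
  have := Fintype.ofFinite j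
  exact of_injective_fintype (unipotentRowHom ℤ j).toHomUnits
    fun v w h => unipotentRowHom_injective j (congrArg Units.val h)

end EmbedsInGLInt

theorem CommGroup.exists_disjoint_ker_free_finiteIndex (A : Type*) [CommGroup A] [Group.FG A] :
    ∃ (j : Type) (_ : Fintype j) (f : A →* (j → Multiplicative ℤ)) (K : Subgroup A),
      K.FiniteIndex ∧ Disjoint K f.ker := by
  obtain ⟨ι, j, _, _, p, hp, e, ⟨σ⟩⟩ := CommGroup.equiv_free_prod_prod_multiplicative_zmod A
  have (i : ι) : NeZero (p i ^ e i) := ⟨pow_ne_zero _ (hp i).ne_zero⟩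
  refine ⟨j, inferInstance, (MonoidHom.fst _ _).comp σ.toMonoidHom,
    ((MonoidHom.snd _ _).comp σ.toMonoidHom).ker, inferInstance, disjoint_def.mpr ?_⟩
  intro a hK hf
  exact σ.injective (Prod.ext (by simpa using MonoidHom.mem_ker.mp hf) (by simpa using MonoidHom.mem_ker.mp hK))

open scoped IsMulCommutative in
theorem Group.exists_finiteIndex_le_center_disjoint_ker_free (G : Type*) [Group G] [Group.FG G]
    [(center G).FiniteIndex] :
    ∃ (H : Subgroup G) (j : Type) (_ : Fintype j) (f : G →* (j → Multiplicative ℤ)),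
      H.FiniteIndex ∧ H ≤ center G ∧ Disjoint H f.ker := by
  obtain ⟨j, _, f, K, hK, hfK⟩ := CommGroup.exists_disjoint_ker_free_finiteIndex (center G)
  refine ⟨K.map (center G).subtype, j, inferInstance, f.comp (MonoidHom.transferCenterPow G),
    ⟨?_⟩, map_subtype_le K, disjoint_def.mpr ?_⟩
  · rw [index_map_subtype]
    exact mul_ne_zero hK.index_ne_zero FiniteIndex.index_ne_zero
  · rintro _ ⟨z, hz, rfl⟩ hfz
    have : MonoidHom.transferCenterPow G ((center G).subtype z) = z ^ (center G).index :=
      Subtype.ext (by simp)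
    rw [MonoidHom.mem_ker, MonoidHom.comp_apply, this, map_pow,
      pow_eq_one_iff_left FiniteIndex.index_ne_zero] at hfz
    simp [disjoint_def.mp hfK hz hfz]

theorem EmbedsInGLInt.of_finiteIndex_center {G : Type*} [Group G] [Group.FG G]
    [(center G).FiniteIndex] : EmbedsInGLInt G := by
  obtain ⟨H, j, _, f, _, hHZ, hHf⟩ := Group.exists_finiteIndex_le_center_disjoint_ker_free G
  have : H.Normal := ⟨fun n hn g => by rwa [mem_center_iff.mp (hHZ hn) g, mul_inv_cancel_right]⟩
  refine of_injective ((QuotientGroup.mk' H).prod f) ?_ (of_finite.prod (pi_multiplicative_int j))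
  rw [injective_iff_map_eq_one]
  intro g hg
  exact disjoint_def.mp hHf ((QuotientGroup.eq_one_iff g).mp (congrArg Prod.fst hg))
    (congrArg Prod.snd hg)

namespace Rack

variable (R : Type*) [Rack R]

theorem closure_range_toEnvelGroup :
    closure (Set.range fun x => (toEnvelGroup R x : EnvelGroup R)) = ⊤ := by
  refine eq_top_iff.mpr fun g _ => Quotient.inductionOn g fun a => ?_
  induction a with
  | unit => exact one_mem _
  | incl x => exact subset_closure ⟨x, rfl⟩
  | mul a b ha hb => exact mul_mem ha hb
  | inv a ha => exact inv_mem ha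

instance [Finite R] : Group.FG (EnvelGroup R) :=
  Group.fg_iff.mpr ⟨_, closure_range_toEnvelGroup R, Set.finite_range _⟩

variable {R}

theorem conj_toEnvelGroup (g : EnvelGroup R) (x : R) :
    g * toEnvelGroup R x * g⁻¹ = toEnvelGroup R (envelAction g x) := by
  have hg : g ∈ closure (Set.range fun x => (toEnvelGroup R x : EnvelGroup R)) := by
    rw [closure_range_toEnvelGroup]; trivial
  induction hg using closure_induction generalizing x with
  | mem _ hy => obtain ⟨y, rfl⟩ := hy; exact ((toEnvelGroup R).map_act (x := y) (y := x)).symm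
  | one => simp
  | mul a b _ _ iha ihb =>
    rw [map_mul, Equiv.Perm.mul_apply, ← iha, ← ihb]
    group
  | inv a _ iha =>
    have h := iha (envelAction a⁻¹ x)
    rw [← Equiv.Perm.mul_apply, ← map_mul, mul_inv_cancel, map_one, Equiv.Perm.one_apply] at h
    rw [← h]
    group

theorem ker_envelAction_le_center : (envelAction (R := R)).ker ≤ center (EnvelGroup R) := by
  intro k hk
  rw [← centralizer_univ, ← coe_top, ← closure_range_toEnvelGroup, centralizer_closure,
    mem_centralizer_iff]
  rintro _ ⟨x, rfl⟩
  have h := conj_toEnvelGroup k x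
  rw [hk, Equiv.Perm.one_apply, mul_inv_eq_iff_eq_mul] at h
  exact h.symm

instance [Finite R] : (center (EnvelGroup R)).FiniteIndex :=
  finiteIndex_of_le ker_envelAction_le_center

end Rack

/-- a finite injective quandle admits an injective linear representation
`ρ : Q → GL_n(ℤ)` over `ℤ`, i.e. an injective map with
`ρ (x ◃ y) = ρ x * ρ y * (ρ x)⁻¹`. -/
theorem finite_injective_quandle_faithful_int_rep (Q : Type) [Quandle Q] [Fintype Q]
    (hinj : Function.Injective (Rack.toEnvelGroup Q)) :
    ∃ (n : ℕ) (ρ : Q → Matrix.GeneralLinearGroup (Fin n) ℤ),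
      Function.Injective ρ ∧ ∀ x y : Q, ρ (x ◃ y) = ρ x * ρ y * (ρ x)⁻¹ := by
  obtain ⟨n, Θ, hΘ⟩ : EmbedsInGLInt (Rack.EnvelGroup Q) :=
    EmbedsInGLInt.of_finiteIndex_center
  refine ⟨n, fun x => Θ (Rack.toEnvelGroup Q x), hΘ.comp hinj, fun x y => ?_⟩
  simp only [(Rack.toEnvelGroup Q).map_act, Quandle.conj_act_eq_conj, map_mul, map_inv]
end

section
/- Let Q be a quandle. The abelianization of the enveloping group G(Q) is isomorphic to the free abelian group on the set Q/Inn(Q) of orbits of Q under the action of Inn(Q), via an isomorphism sending the class of φ_Q(x) to the basis element indexed by the orbit of x, for every x ∈ Q. -/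
open Quandles

/-- The group `Inn(Q)` of inner automorphisms of a quandle `Q`: the subgroup of the
permutation group of `Q` generated by the left translations `L_x : y ↦ x ◃ y`. -/
def quandleInn (Q : Type) [Quandle Q] : Subgroup (Equiv.Perm Q) :=
  Subgroup.closure (Set.range fun x : Q => (Rack.act' x : Equiv.Perm Q))

/-!
A homomorphism from `G(Q)` to an abelian group `A` is a map `f : Q → A` with
`f (x ◃ y) = f x * f y * (f x)⁻¹ = f y`, that is, a map constant on the `Inn(Q)`-orbits.
So both `G(Q)^ab` and the free abelian group on `Q/Inn(Q)` are universal for such maps,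
and the mutually inverse homomorphisms `φ_Q x ↦ [x]` and `[x] ↦ φ_Q x` need only be
compared on generators.
-/

namespace Rack

variable {R : Type*} [Rack R]

theorem EnvelGroup.hom_ext {G : Type*} [Group G] {f g : EnvelGroup R →* G}
    (h : ∀ x, f (toEnvelGroup R x) = g (toEnvelGroup R x)) : f = g :=
  toEnvelGroup.map.symm.injective (DFunLike.ext _ _ h)

theorem abelianization_of_toEnvelGroup_act (x y : R) :
    Abelianization.of (toEnvelGroup R (x ◃ y)) = Abelianization.of (toEnvelGroup R y) := by
  rw [ShelfHom.map_act, Quandle.conj_act_eq_conj, map_mul, map_mul, map_inv, mul_comm,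
    inv_mul_cancel_left]

def toConjOfActInvariant {A : Type*} [CommGroup A] (f : R → A)
    (hf : ∀ x y, f (x ◃ y) = f y) : R →◃ Quandle.Conj A where
  toFun := f
  map_act' {x y} := by
    rw [Quandle.conj_act_eq_conj, hf, mul_comm, inv_mul_cancel_left]

end Rack

section Orbits

variable {Q : Type} [Quandle Q]

theorem orbitRel_quandleInn_act (x y : Q) : MulAction.orbitRel (quandleInn Q) Q (x ◃ y) y :=
  ⟨⟨Rack.act' x, Subgroup.subset_closure ⟨x, rfl⟩⟩, rfl⟩

theorem apply_eq_of_mem_quandleInn {β : Type*} {f : Q → β} (hf : ∀ x y, f (x ◃ y) = f y)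
    {g : Equiv.Perm Q} (hg : g ∈ quandleInn Q) (y : Q) : f (g y) = f y := by
  induction hg using Subgroup.closure_induction generalizing y with
  | mem _ hL => obtain ⟨x, rfl⟩ := hL; exact hf x y
  | one => rfl
  | mul a b _ _ ha hb => exact (ha (b y)).trans (hb y)
  | inv a _ ha => simpa using (ha (a⁻¹ y)).symm

def quandleInnOrbitLift {β : Type*} (f : Q → β) (hf : ∀ x y, f (x ◃ y) = f y) :
    MulAction.orbitRel.Quotient (quandleInn Q) Q → β :=
  Quotient.lift f fun _ y ⟨g, hgy⟩ => hgy ▸ apply_eq_of_mem_quandleInn hf g.2 y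

end Orbits

section Abelianization

open Rack

variable (Q : Type) [Quandle Q]

abbrev quandleInnOrbits : Type := MulAction.orbitRel.Quotient (quandleInn Q) Q

def orbitGenerator (x : Q) : Multiplicative (FreeAbelianGroup (quandleInnOrbits Q)) :=
  Multiplicative.ofAdd (FreeAbelianGroup.of (Quotient.mk _ x))

def abelianizationToFreeOrbits :
    Abelianization (EnvelGroup Q) →* Multiplicative (FreeAbelianGroup (quandleInnOrbits Q)) :=
  Abelianization.lift <| toEnvelGroup.map <| toConjOfActInvariant (orbitGenerator Q) fun x y =>
    congrArg (Multiplicative.ofAdd ∘ FreeAbelianGroup.of)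
      (Quotient.sound (orbitRel_quandleInn_act x y))

def freeOrbitsToAbelianization :
    Multiplicative (FreeAbelianGroup (quandleInnOrbits Q)) →* Abelianization (EnvelGroup Q) :=
  AddMonoidHom.toMultiplicativeLeft <| FreeAbelianGroup.lift <|
    quandleInnOrbitLift (fun x => Additive.ofMul (Abelianization.of (toEnvelGroup Q x)))
      fun x y => congrArg Additive.ofMul (abelianization_of_toEnvelGroup_act x y)

variable {Q}

theorem abelianizationToFreeOrbits_of (x : Q) :
    abelianizationToFreeOrbits Q (Abelianization.of (toEnvelGroup Q x)) = orbitGenerator Q x :=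
  rfl

theorem freeOrbitsToAbelianization_orbitGenerator (x : Q) :
    freeOrbitsToAbelianization Q (orbitGenerator Q x) = Abelianization.of (toEnvelGroup Q x) := by
  simp [freeOrbitsToAbelianization, orbitGenerator, quandleInnOrbitLift]

variable (Q)

def abelianizationEnvelGroupEquiv :
    Abelianization (EnvelGroup Q) ≃* Multiplicative (FreeAbelianGroup (quandleInnOrbits Q)) :=
  MonoidHom.toMulEquiv (abelianizationToFreeOrbits Q) (freeOrbitsToAbelianization Q)
    (Abelianization.hom_ext _ _ <| EnvelGroup.hom_ext fun x => by
      simp [abelianizationToFreeOrbits_of, freeOrbitsToAbelianization_orbitGenerator])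
    (by
      ext q
      induction q using Quotient.inductionOn with
      | h x =>
        change Multiplicative.toAdd (abelianizationToFreeOrbits Q
          (freeOrbitsToAbelianization Q (orbitGenerator Q x))) = _
        rw [freeOrbitsToAbelianization_orbitGenerator, abelianizationToFreeOrbits_of]
        rfl)

end Abelianization

/-- the abelianization of `G(Q)` is isomorphic to the free abelian group
on the set `Q/Inn(Q)` of orbits, by an isomorphism sending the class of `φ_Q x` to the
basis element indexed by the orbit of `x`. -/
theorem abelianization_envelGroup_iso_freeAbelianGroup_orbits (Q : Type) [Quandle Q] :
    ∃ e : Abelianization (Rack.EnvelGroup Q) ≃*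
        Multiplicative (FreeAbelianGroup (MulAction.orbitRel.Quotient (quandleInn Q) Q)),
      ∀ x : Q, e (Abelianization.of (Rack.toEnvelGroup Q x)) =
        Multiplicative.ofAdd (FreeAbelianGroup.of
          (Quotient.mk (MulAction.orbitRel (quandleInn Q) Q) x)) :=
  ⟨abelianizationEnvelGroupEquiv Q, abelianizationToFreeOrbits_of⟩
end
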